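/- Quantitative soundness of satisfaction classes (strengthening of Lemma 1 used in its inductive proof): for every STL formula φ with a classification criterion fixed as in the context, every satisfaction class ψ ∈ Cls⁺(φ), every valuation θ ∈ Θ, and every signal w, the robustness satisfies ρ(w, ψ(θ)) ≤ ρ(w, φ). -/

import Mathlib

/-!
A satisfaction class of `φ` replaces every temporal operator by a conjunction (for `□`) or a
disjunction (for `◇`, `U`) over the segments of a split of its interval, and every subformula
by a satisfaction class, or by a violation class below a negation.  One proves simultaneously
that satisfaction classes have robustness at most that of `φ` and violation classes at least
that of `φ`: the infimum (supremum) over `[a, b]` is the minimum (maximum) of the infima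
(suprema) over the segments.  For `φ₁ U φ₂`, a witness time `t` lies in a first segment `i`,
and the guards `□ ξ_j`, `j < i`, only look at times in `[0, t)`, where `φ₁` is already required.
-/

namespace STLClass

abbrev Signal (N : ℕ) := ℝ → Fin N → ℝ

def shift {N : ℕ} (w : Signal N) (t : ℝ) : Signal N := fun t' => w (t + t')

inductive STL (N : ℕ) : Type where
  | atom (f : (Fin N → ℝ) → ℝ)
  | falsum
  | not (φ : STL N)
  | and (φ₁ φ₂ : STL N)
  | or (φ₁ φ₂ : STL N)
  | always (a b : ℝ) (φ : STL N)
  | event (a b : ℝ) (φ : STL N)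
  | untl (a b : ℝ) (φ₁ φ₂ : STL N)

def STL.top {N : ℕ} : STL N := .not .falsum

noncomputable def robust {N : ℕ} : STL N → Signal N → EReal
  | .atom f, w => ((f (w 0) : ℝ) : EReal)
  | .falsum, _ => ⊥
  | .not φ, w => - robust φ w
  | .and φ₁ φ₂, w => min (robust φ₁ w) (robust φ₂ w)
  | .or φ₁ φ₂, w => max (robust φ₁ w) (robust φ₂ w)
  | .always a b φ, w => ⨅ t : Set.Icc a b, robust φ (shift w t.1)
  | .event a b φ, w => ⨆ t : Set.Icc a b, robust φ (shift w t.1)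
  | .untl a b φ₁ φ₂, w =>
      ⨆ t : Set.Icc a b,
        min (robust φ₂ (shift w t.1)) (⨅ t' : Set.Ico (0 : ℝ) t.1, robust φ₁ (shift w t'.1))

def Sat {N : ℕ} (w : Signal N) (φ : STL N) : Prop := 0 < robust φ w

def Vio {N : ℕ} (w : Signal N) (φ : STL N) : Prop := robust φ w < 0

/-- An STL formula together with a classification criterion: each temporal operator is
annotated with a natural number `k`, meaning that its interval is split into `k + 1`
consecutive segments (so the "positive integer" of the criterion is `k + 1`). -/
inductive AForm (N : ℕ) : Type where
  | atom (f : (Fin N → ℝ) → ℝ)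
  | falsum
  | not (φ : AForm N)
  | and (φ₁ φ₂ : AForm N)
  | or (φ₁ φ₂ : AForm N)
  | always (a b : ℝ) (k : ℕ) (φ : AForm N)
  | event (a b : ℝ) (k : ℕ) (φ : AForm N)
  | untl (a b : ℝ) (k : ℕ) (φ₁ φ₂ : AForm N)

/-- The underlying STL formula of an annotated formula. -/
def AForm.toSTL {N : ℕ} : AForm N → STL N
  | .atom f => .atom f
  | .falsum => .falsum
  | .not φ => .not φ.toSTL
  | .and φ₁ φ₂ => .and φ₁.toSTL φ₂.toSTL
  | .or φ₁ φ₂ => .or φ₁.toSTL φ₂.toSTL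
  | .always a b _ φ => .always a b φ.toSTL
  | .event a b _ φ => .event a b φ.toSTL
  | .untl a b _ φ₁ φ₂ => .untl a b φ₁.toSTL φ₂.toSTL

/-- Well-formedness: every temporal interval `[a, b]` satisfies `0 ≤ a < b`. -/
def AForm.WF {N : ℕ} : AForm N → Prop
  | .atom _ => True
  | .falsum => True
  | .not φ => φ.WF
  | .and φ₁ φ₂ => φ₁.WF ∧ φ₂.WF
  | .or φ₁ φ₂ => φ₁.WF ∧ φ₂.WF
  | .always a b _ φ => 0 ≤ a ∧ a < b ∧ φ.WF
  | .event a b _ φ => 0 ≤ a ∧ a < b ∧ φ.WF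
  | .untl a b _ φ₁ φ₂ => 0 ≤ a ∧ a < b ∧ φ₁.WF ∧ φ₂.WF

/-- A split of the interval `[a, b]` into `n` consecutive nonsingular segments:
`n + 1` strictly increasing points starting at `a` and ending at `b`.  The segment
`i` is `[pts i.castSucc, pts i.succ]`. -/
structure Split (a b : ℝ) (n : ℕ) : Type where
  pts : Fin (n + 1) → ℝ
  strictMono : StrictMono pts
  first : pts 0 = a
  last : pts (Fin.last n) = b

/-- The valuation space `Θ` of an annotated formula: a choice of admissible breakpoints
for each temporal subformula. -/
def Val {N : ℕ} : AForm N → Type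
  | .atom _ => PUnit
  | .falsum => PUnit
  | .not φ => Val φ
  | .and φ₁ φ₂ => Val φ₁ × Val φ₂
  | .or φ₁ φ₂ => Val φ₁ × Val φ₂
  | .always a b k φ => Split a b (k + 1) × Val φ
  | .event a b k φ => Split a b (k + 1) × Val φ
  | .untl a b k φ₁ φ₂ => Split a b (k + 1) × Val φ₁ × Val φ₂

/-- Finite conjunction of a list of STL formulas (empty conjunction is `⊤`). -/
def listAnd {N : ℕ} : List (STL N) → STL N
  | [] => STL.top
  | [φ] => φ
  | φ :: φ' :: rest => .and φ (listAnd (φ' :: rest))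

/-- Finite disjunction of a list of STL formulas (empty disjunction is `⊥`). -/
def listOr {N : ℕ} : List (STL N) → STL N
  | [] => .falsum
  | [φ] => φ
  | φ :: φ' :: rest => .or φ (listOr (φ' :: rest))

/-- `⋀_{i} f i`. -/
def iAnd {N : ℕ} {k : ℕ} (f : Fin k → STL N) : STL N := listAnd (List.ofFn f)

/-- `⋁_{i} f i`. -/
def iOr {N : ℕ} {k : ℕ} (f : Fin k → STL N) : STL N := listOr (List.ofFn f)

/-- `Cls true φ` is the set `Cls⁺(φ)` of satisfaction classes and `Cls false φ` is the
set `Cls⁻(φ)` of violation classes; a class is represented by its instantiation map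
`Θ → STL N` sending a valuation `θ` to the STL formula `ψ(θ)`. -/
def Cls {N : ℕ} : Bool → (φ : AForm N) → Set (Val φ → STL N)
  | b, .atom f =>
      {fun _ => if b then STL.falsum else STL.top, fun _ => STL.atom f}
  | _, .falsum => {fun _ => STL.falsum}
  | b, .not φ =>
      {c | ∃ ψ ∈ Cls (!b) φ, c = fun θ => STL.not (ψ θ)}
  | b, .and φ₁ φ₂ =>
      {c | ∃ ψ₁ ∈ Cls b φ₁, ∃ ψ₂ ∈ Cls b φ₂,
        c = fun θ => STL.and (ψ₁ θ.1) (ψ₂ θ.2)}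
  | b, .or φ₁ φ₂ =>
      {c | ∃ ψ₁ ∈ Cls b φ₁, ∃ ψ₂ ∈ Cls b φ₂,
        c = fun θ => STL.or (ψ₁ θ.1) (ψ₂ θ.2)}
  | b, .always _ _ k φ =>
      {c | ∃ ψ : Fin (k + 1) → Val φ → STL N, (∀ i, ψ i ∈ Cls b φ) ∧
        c = fun θ => iAnd fun i : Fin (k + 1) =>
          STL.always (θ.1.pts i.castSucc) (θ.1.pts i.succ) (ψ i θ.2)}
  | b, .event _ _ k φ =>
      {c | ∃ ψ : Fin (k + 1) → Val φ → STL N, (∀ i, ψ i ∈ Cls b φ) ∧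
        c = fun θ => iOr fun i : Fin (k + 1) =>
          STL.event (θ.1.pts i.castSucc) (θ.1.pts i.succ) (ψ i θ.2)}
  | b, .untl _ _ k φ₁ φ₂ =>
      {c | ∃ ψ : Fin (k + 1) → Val φ₁ → STL N, ∃ σ : Fin (k + 1) → Val φ₂ → STL N,
           ∃ ξ : Fin (k + 1) → Fin (k + 1) → Val φ₁ → STL N,
        (∀ i, ψ i ∈ Cls b φ₁) ∧ (∀ i, σ i ∈ Cls b φ₂) ∧ (∀ i j, ξ i j ∈ Cls b φ₁) ∧
        c = fun θ => iOr fun i : Fin (k + 1) =>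
          STL.and
            (STL.untl (θ.1.pts i.castSucc) (θ.1.pts i.succ) (ψ i θ.2.1) (σ i θ.2.2))
            (iAnd fun j : Fin (i : ℕ) =>
              STL.always (θ.1.pts (j.castLE i.isLt.le).castSucc)
                (θ.1.pts (j.castLE i.isLt.le).succ) (ξ i (j.castLE i.isLt.le) θ.2.1))}

/-- The satisfiable set `S(ψ)` of a class. -/
def SatSet {N : ℕ} (φ : AForm N) (ψ : Val φ → STL N) : Set (Signal N) :=
  {w | ∃ θ : Val φ, Sat w (ψ θ)}

/-- The falsifiable set `V(ψ)` of a class. -/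
def VioSet {N : ℕ} (φ : AForm N) (ψ : Val φ → STL N) : Set (Signal N) :=
  {w | ∃ θ : Val φ, Vio w (ψ θ)}

section Classes

variable {N : ℕ}

lemma robust_listAnd (w : Signal N) :
    ∀ l : List (STL N), robust (listAnd l) w = ⨅ φ ∈ l, robust φ w
  | [] => by simp [listAnd, STL.top, robust]
  | [φ] => by simp [listAnd]
  | φ :: φ' :: rest => by
      rw [listAnd, robust, robust_listAnd w (φ' :: rest)]
      simp [iInf_or, iInf_inf_eq]

lemma robust_listOr (w : Signal N) :
    ∀ l : List (STL N), robust (listOr l) w = ⨆ φ ∈ l, robust φ w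
  | [] => by simp [listOr, robust]
  | [φ] => by simp [listOr]
  | φ :: φ' :: rest => by
      rw [listOr, robust, robust_listOr w (φ' :: rest)]
      simp [iSup_or, iSup_sup_eq]

lemma robust_iAnd {k : ℕ} (f : Fin k → STL N) (w : Signal N) :
    robust (iAnd f) w = ⨅ i, robust (f i) w := by
  simp only [iAnd, robust_listAnd, List.mem_ofFn']
  exact iInf_range

lemma robust_iOr {k : ℕ} (f : Fin k → STL N) (w : Signal N) :
    robust (iOr f) w = ⨆ i, robust (f i) w := by
  simp only [iOr, robust_listOr, List.mem_ofFn']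
  exact iSup_range

section Monotone

variable {a b c d : ℝ} {φ ψ φ₁ φ₂ ψ₁ ψ₂ : STL N}

theorem robust_always_le_always (hI : Set.Icc c d ⊆ Set.Icc a b)
    (h : ∀ w, robust φ w ≤ robust ψ w) (w : Signal N) :
    robust (.always a b φ) w ≤ robust (.always c d ψ) w :=
  le_iInf fun t => (iInf_le _ ⟨t, hI t.2⟩).trans (h _)

theorem robust_event_le_event (hI : Set.Icc a b ⊆ Set.Icc c d)
    (h : ∀ w, robust φ w ≤ robust ψ w) (w : Signal N) :
    robust (.event a b φ) w ≤ robust (.event c d ψ) w :=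
  iSup_le fun t => (h _).trans (le_iSup_of_le ⟨t, hI t.2⟩ le_rfl)

theorem robust_untl_le_untl (hI : Set.Icc a b ⊆ Set.Icc c d)
    (h₁ : ∀ w, robust φ₁ w ≤ robust ψ₁ w) (h₂ : ∀ w, robust φ₂ w ≤ robust ψ₂ w)
    (w : Signal N) :
    robust (.untl a b φ₁ φ₂) w ≤ robust (.untl c d ψ₁ ψ₂) w :=
  iSup_le fun t => le_iSup_of_le ⟨t, hI t.2⟩ <|
    min_le_min (h₂ _) (iInf_mono fun _ => h₁ _)

end Monotone

namespace Split

variable {a b : ℝ}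

theorem pts_mem_Icc {n : ℕ} (s : Split a b n) (i : Fin (n + 1)) : s.pts i ∈ Set.Icc a b :=
  ⟨s.first.symm.trans_le (s.strictMono.monotone (Fin.zero_le i)),
    (s.strictMono.monotone (Fin.le_last i)).trans_eq s.last⟩

theorem Icc_subset {n : ℕ} (s : Split a b n) (i : Fin n) :
    Set.Icc (s.pts i.castSucc) (s.pts i.succ) ⊆ Set.Icc a b :=
  Set.Icc_subset_Icc (s.pts_mem_Icc _).1 (s.pts_mem_Icc _).2

theorem exists_mem_Icc {n : ℕ} (s : Split a b (n + 1)) {t : ℝ} (ht : t ∈ Set.Icc a b) :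
    ∃ i : Fin (n + 1), t ∈ Set.Icc (s.pts i.castSucc) (s.pts i.succ) ∧
      ∀ j < i, s.pts j.succ < t := by
  classical
  have hlast : Fin.last n ∈ Finset.univ.filter (fun i => t ≤ s.pts i.succ) := by
    simpa [s.last] using ht.2
  obtain ⟨i, hi, hmin⟩ := Finset.exists_min_image _ id ⟨_, hlast⟩
  simp only [Finset.mem_filter, Finset.mem_univ, true_and, id] at hi hmin
  have hprev : ∀ j < i, s.pts j.succ < t := fun j hj => not_le.1 fun h => hj.not_ge (hmin j h)
  refine ⟨i, ⟨?_, hi⟩, hprev⟩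
  rcases Fin.eq_zero_or_eq_succ i with rfl | ⟨j, rfl⟩
  · simpa [s.first] using ht.1
  · rw [← Fin.succ_castSucc]
    exact (hprev _ Fin.castSucc_lt_succ).le

section Segments

variable {k : ℕ} (s : Split a b (k + 1))

theorem robust_iAnd_always_le {φ : STL N} {ψ : Fin (k + 1) → STL N}
    (h : ∀ i w, robust (ψ i) w ≤ robust φ w) (w : Signal N) :
    robust (iAnd fun i => .always (s.pts i.castSucc) (s.pts i.succ) (ψ i)) w ≤
      robust (.always a b φ) w := by
  rw [robust_iAnd]
  refine le_iInf fun t => ?_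
  obtain ⟨i, hti, -⟩ := s.exists_mem_Icc t.2
  exact (iInf_le _ i).trans ((iInf_le _ ⟨t, hti⟩).trans (h i _))

theorem robust_always_le_iAnd_always {φ : STL N} {ψ : Fin (k + 1) → STL N}
    (h : ∀ i w, robust φ w ≤ robust (ψ i) w) (w : Signal N) :
    robust (.always a b φ) w ≤
      robust (iAnd fun i => .always (s.pts i.castSucc) (s.pts i.succ) (ψ i)) w := by
  rw [robust_iAnd]
  exact le_iInf fun i => robust_always_le_always (s.Icc_subset i) (h i) w

theorem robust_iOr_event_le {φ : STL N} {ψ : Fin (k + 1) → STL N}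
    (h : ∀ i w, robust (ψ i) w ≤ robust φ w) (w : Signal N) :
    robust (iOr fun i => .event (s.pts i.castSucc) (s.pts i.succ) (ψ i)) w ≤
      robust (.event a b φ) w := by
  rw [robust_iOr]
  exact iSup_le fun i => robust_event_le_event (s.Icc_subset i) (h i) w

theorem robust_event_le_iOr_event {φ : STL N} {ψ : Fin (k + 1) → STL N}
    (h : ∀ i w, robust φ w ≤ robust (ψ i) w) (w : Signal N) :
    robust (.event a b φ) w ≤
      robust (iOr fun i => .event (s.pts i.castSucc) (s.pts i.succ) (ψ i)) w := by
  rw [robust_iOr]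
  refine iSup_le fun t => ?_
  obtain ⟨i, hti, -⟩ := s.exists_mem_Icc t.2
  have hseg : robust φ (shift w t) ≤ robust (.event (s.pts i.castSucc) (s.pts i.succ) φ) w :=
    le_iSup_of_le (⟨t, hti⟩ : Set.Icc (s.pts i.castSucc) (s.pts i.succ)) le_rfl
  exact le_iSup_of_le i (hseg.trans (robust_event_le_event subset_rfl (h i) w))

theorem robust_iOr_untl_le {φ₁ φ₂ : STL N} {ψ σ χ : Fin (k + 1) → STL N}
    (h₁ : ∀ i w, robust (ψ i) w ≤ robust φ₁ w) (h₂ : ∀ i w, robust (σ i) w ≤ robust φ₂ w)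
    (w : Signal N) :
    robust (iOr fun i =>
        .and (.untl (s.pts i.castSucc) (s.pts i.succ) (ψ i) (σ i)) (χ i)) w ≤
      robust (.untl a b φ₁ φ₂) w := by
  rw [robust_iOr]
  exact iSup_le fun i =>
    min_le_left _ _ |>.trans (robust_untl_le_untl (s.Icc_subset i) (h₁ i) (h₂ i) w)

theorem robust_untl_le_iOr_untl (ha : 0 ≤ a) {φ₁ φ₂ : STL N} {ψ σ : Fin (k + 1) → STL N}
    {ξ : Fin (k + 1) → Fin (k + 1) → STL N}
    (h₁ : ∀ i w, robust φ₁ w ≤ robust (ψ i) w) (h₂ : ∀ i w, robust φ₂ w ≤ robust (σ i) w)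
    (hξ : ∀ i j w, robust φ₁ w ≤ robust (ξ i j) w) (w : Signal N) :
    robust (.untl a b φ₁ φ₂) w ≤
      robust (iOr fun i : Fin (k + 1) =>
        .and (.untl (s.pts i.castSucc) (s.pts i.succ) (ψ i) (σ i))
          (iAnd fun j : Fin i =>
            .always (s.pts (j.castLE i.isLt.le).castSucc) (s.pts (j.castLE i.isLt.le).succ)
              (ξ i (j.castLE i.isLt.le)))) w := by
  rw [robust_iOr]
  refine iSup_le fun t => ?_
  obtain ⟨i, hti, hprev⟩ := s.exists_mem_Icc t.2
  refine le_iSup_of_le i (le_min ?_ ?_)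
  · exact (le_iSup_of_le ⟨t, hti⟩ le_rfl).trans
      (robust_untl_le_untl subset_rfl (h₁ i) (h₂ i) w)
  · rw [robust_iAnd]
    refine le_iInf fun j => le_iInf fun t' => (min_le_right _ _).trans ?_
    have ht'_nonneg : 0 ≤ t'.1 := ha.trans (s.Icc_subset _ t'.2).1
    have ht'_lt : t'.1 < t := t'.2.2.trans_lt (hprev _ j.isLt)
    exact (iInf_le _ ⟨t'.1, ht'_nonneg, ht'_lt⟩).trans (hξ _ _ _)

end Segments

end Split

theorem robust_bounds_of_mem_Cls (φ : AForm N) (hφ : φ.WF) :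
    (∀ ψ ∈ Cls true φ, ∀ θ w, robust (ψ θ) w ≤ robust φ.toSTL w) ∧
      (∀ ψ ∈ Cls false φ, ∀ θ w, robust φ.toSTL w ≤ robust (ψ θ) w) := by
  induction φ with
  | atom f =>
    refine ⟨?_, ?_⟩ <;> rintro _ (rfl | rfl) θ w
    · exact bot_le
    · exact le_rfl
    · exact le_top
    · exact le_rfl
  | falsum => refine ⟨?_, ?_⟩ <;> rintro _ rfl θ w <;> exact le_rfl
  | not φ ih =>
    obtain ⟨ih_sat, ih_vio⟩ := ih hφ
    refine ⟨?_, ?_⟩ <;> rintro _ ⟨ψ, hψ, rfl⟩ θ w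
    · exact EReal.neg_le_neg_iff.2 (ih_vio ψ hψ θ w)
    · exact EReal.neg_le_neg_iff.2 (ih_sat ψ hψ θ w)
  | and φ₁ φ₂ ih₁ ih₂ =>
    obtain ⟨⟨ih₁_sat, ih₁_vio⟩, ⟨ih₂_sat, ih₂_vio⟩⟩ := And.intro (ih₁ hφ.1) (ih₂ hφ.2)
    refine ⟨?_, ?_⟩ <;> rintro _ ⟨ψ₁, hψ₁, ψ₂, hψ₂, rfl⟩ θ w
    · exact min_le_min (ih₁_sat ψ₁ hψ₁ θ.1 w) (ih₂_sat ψ₂ hψ₂ θ.2 w)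
    · exact min_le_min (ih₁_vio ψ₁ hψ₁ θ.1 w) (ih₂_vio ψ₂ hψ₂ θ.2 w)
  | or φ₁ φ₂ ih₁ ih₂ =>
    obtain ⟨⟨ih₁_sat, ih₁_vio⟩, ⟨ih₂_sat, ih₂_vio⟩⟩ := And.intro (ih₁ hφ.1) (ih₂ hφ.2)
    refine ⟨?_, ?_⟩ <;> rintro _ ⟨ψ₁, hψ₁, ψ₂, hψ₂, rfl⟩ θ w
    · exact max_le_max (ih₁_sat ψ₁ hψ₁ θ.1 w) (ih₂_sat ψ₂ hψ₂ θ.2 w)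
    · exact max_le_max (ih₁_vio ψ₁ hψ₁ θ.1 w) (ih₂_vio ψ₂ hψ₂ θ.2 w)
  | always a b k φ ih =>
    obtain ⟨ih_sat, ih_vio⟩ := ih hφ.2.2
    refine ⟨?_, ?_⟩ <;> rintro _ ⟨ψ, hψ, rfl⟩ θ w
    · exact θ.1.robust_iAnd_always_le (fun i => ih_sat _ (hψ i) θ.2) w
    · exact θ.1.robust_always_le_iAnd_always (fun i => ih_vio _ (hψ i) θ.2) w
  | event a b k φ ih =>
    obtain ⟨ih_sat, ih_vio⟩ := ih hφ.2.2
    refine ⟨?_, ?_⟩ <;> rintro _ ⟨ψ, hψ, rfl⟩ θ w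
    · exact θ.1.robust_iOr_event_le (fun i => ih_sat _ (hψ i) θ.2) w
    · exact θ.1.robust_event_le_iOr_event (fun i => ih_vio _ (hψ i) θ.2) w
  | untl a b k φ₁ φ₂ ih₁ ih₂ =>
    obtain ⟨ha, -, hφ₁, hφ₂⟩ := hφ
    obtain ⟨⟨ih₁_sat, ih₁_vio⟩, ⟨ih₂_sat, ih₂_vio⟩⟩ := And.intro (ih₁ hφ₁) (ih₂ hφ₂)
    refine ⟨?_, ?_⟩ <;> rintro _ ⟨ψ, σ, ξ, hψ, hσ, hξ, rfl⟩ θ w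
    · exact θ.1.robust_iOr_untl_le (fun i => ih₁_sat _ (hψ i) θ.2.1)
        (fun i => ih₂_sat _ (hσ i) θ.2.2) w
    · exact θ.1.robust_untl_le_iOr_untl ha (fun i => ih₁_vio _ (hψ i) θ.2.1)
        (fun i => ih₂_vio _ (hσ i) θ.2.2) (fun i j => ih₁_vio _ (hξ i j) θ.2.1) w

end Classes

/-- Quantitative soundness of satisfaction classes: for every `ψ ∈ Cls⁺(φ)`, every
valuation `θ ∈ Θ` and every signal `w`, `ρ(w, ψ(θ)) ≤ ρ(w, φ)`. -/
theorem sat_class_quantitative {N : ℕ} (φ : AForm N) (hφ : φ.WF)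
    (ψ : Val φ → STL N) (hψ : ψ ∈ Cls true φ) (θ : Val φ) (w : Signal N) :
    robust (ψ θ) w ≤ robust φ.toSTL w :=
  (robust_bounds_of_mem_Cls φ hφ).1 ψ hψ θ w

end STLClass
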